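/- arXiv:2605.30450 — 3 statements merged into one kernel-verified Lean document; each statement's English description precedes it below -/
import Mathlib

section
/- Over the field K = ℚ(q1,q2) of rational functions, the matrix E = M(2,2) has rank exactly 6; equivalently, its kernel is 3-dimensional and is spanned by α = (2(q1+q2),0,0,−1,1,−1,0,0,0), β = (0,−2q2,2q1,0,0,0,−1,1,0), and γ = (−4q1q2,0,0,−2q2,0,−2q1,0,0,1). -/
open MvPolynomial Matrix

/-- The matrix of small quantum multiplication by `a1*h1 + a2*h2` on the
ambient cohomology of a Verra fourfold, in the basis
`(1, h1, h2, h1^2, h1*h2, h2^2, h1^2*h2, h1*h2^2, h1^2*h2^2)`. -/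
def verraM {R : Type*} [CommRing R] (q1 q2 a1 a2 : R) : Matrix (Fin 9) (Fin 9) R :=
  let b1 := a1 * q1
  let b2 := a2 * q2
  let c := 8 * (a1 + a2) * q1 * q2
  !![0, 2*b1, 2*b2, 0, 0, 0, c, c, 0;
     a1, 0, 0, 2*b1, 2*b2, 4*b2, 0, 0, c;
     a2, 0, 0, 4*b1, 2*b1, 2*b2, 0, 0, c;
     0, a1, 0, 0, 0, 0, 2*b2, 4*b2, 0;
     0, a2, a1, 0, 0, 0, 2*b1, 2*b2, 0;
     0, 0, a2, 0, 0, 0, 4*b1, 2*b1, 0;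
     0, 0, 0, a2, a1, 0, 0, 0, 2*b2;
     0, 0, 0, 0, a2, a1, 0, 0, 2*b1;
     0, 0, 0, 0, 0, 0, a2, a1, 0]

/-- `K = ℚ(q1, q2)`, the field of rational functions in two variables. -/
abbrev Kq : Type := FractionRing (MvPolynomial (Fin 2) ℚ)

noncomputable def q1 : Kq := algebraMap (MvPolynomial (Fin 2) ℚ) Kq (X 0)
noncomputable def q2 : Kq := algebraMap (MvPolynomial (Fin 2) ℚ) Kq (X 1)
noncomputable def alpha : Fin 9 → Kq := ![2*(q1+q2), 0, 0, -1, 1, -1, 0, 0, 0]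
noncomputable def beta : Fin 9 → Kq := ![0, -2*q2, 2*q1, 0, 0, 0, -1, 1, 0]
noncomputable def gamma : Fin 9 → Kq := ![-4*q1*q2, 0, 0, -2*q2, 0, -2*q1, 0, 0, 1]

/-! `verraM` is homogeneous of degree one in `(a1, a2)`, so `E = 2 • M(1,1)` and, as `2 ≠ 0`,
both matrices have the same kernel. The linear system `M(1,1) v = 0` can be solved over any
commutative ring: `v 4`, `v 6`, `v 8` are free and rows 1, 3, 5, 6, 7, 8 determine the remaining
coordinates, which exhibits the kernel as the span of `α, β, γ`. These three vectors restrict to the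
standard basis on the coordinates `4, 7, 8`, hence are independent, and rank–nullity gives
`rank E = 9 - 3`. -/

theorem Matrix.rank_add_card_eq_of_ker_eq_span {K m n ι : Type*} [Field K] [Fintype n]
    [Fintype ι] (A : Matrix m n K) {b : ι → n → K} (hb : LinearIndependent K b)
    (hker : LinearMap.ker A.mulVecLin = Submodule.span K (Set.range b)) :
    A.rank + Fintype.card ι = Fintype.card n := by
  rw [Matrix.rank, ← finrank_span_eq_card hb, ← hker, LinearMap.finrank_range_add_finrank_ker,
    Module.finrank_fintype_fun_eq_card]

theorem verraM_mul_mul_eq_smul {R : Type*} [CommRing R] (t q1 q2 a1 a2 : R) :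
    verraM q1 q2 (t * a1) (t * a2) = t • verraM q1 q2 a1 a2 := by
  ext i j
  fin_cases i <;> fin_cases j <;> simp [verraM] <;> ring

section
variable {R : Type*} [CommRing R]

theorem verraM_one_one_mulVec (q1 q2 : R) (v : Fin 9 → R) :
    verraM q1 q2 1 1 *ᵥ v =
      ![2*q1*v 1 + 2*q2*v 2 + 16*q1*q2*(v 6 + v 7),
        v 0 + 2*q1*v 3 + 2*q2*v 4 + 4*q2*v 5 + 16*q1*q2*v 8,
        v 0 + 4*q1*v 3 + 2*q1*v 4 + 2*q2*v 5 + 16*q1*q2*v 8,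
        v 1 + 2*q2*v 6 + 4*q2*v 7,
        v 1 + v 2 + 2*q1*v 6 + 2*q2*v 7,
        v 2 + 4*q1*v 6 + 2*q1*v 7,
        v 3 + v 4 + 2*q2*v 8,
        v 4 + v 5 + 2*q1*v 8,
        v 6 + v 7] := by
  ext j
  fin_cases j <;> simp [verraM, mulVec, dotProduct, Fin.sum_univ_succ] <;> ring

def verraKerBasis (q1 q2 : R) : Fin 3 → Fin 9 → R :=
  ![![2*(q1+q2), 0, 0, -1, 1, -1, 0, 0, 0],
    ![0, -2*q2, 2*q1, 0, 0, 0, -1, 1, 0],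
    ![-4*q1*q2, 0, 0, -2*q2, 0, -2*q1, 0, 0, 1]]

theorem verraM_one_one_mulVec_verraKerBasis (q1 q2 : R) (i : Fin 3) :
    verraM q1 q2 1 1 *ᵥ verraKerBasis q1 q2 i = 0 := by
  rw [verraM_one_one_mulVec]
  ext j
  fin_cases i <;> fin_cases j <;> simp [verraKerBasis] <;> ring

theorem eq_sum_verraKerBasis_of_mulVec_eq_zero {q1 q2 : R} {v : Fin 9 → R}
    (hv : verraM q1 q2 1 1 *ᵥ v = 0) :
    v = ∑ i, ![v 4, -v 6, v 8] i • verraKerBasis q1 q2 i := by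
  rw [verraM_one_one_mulVec] at hv
  simp only [cons_eq_zero_iff] at hv
  obtain ⟨-, r1, -, r3, -, r5, r6, r7, r8, -⟩ := hv
  rw [Fin.sum_univ_three]
  ext j
  fin_cases j <;> simp only [verraKerBasis, Fin.zero_eta, Fin.mk_one, Fin.reduceFinMk, Pi.add_apply,
    Pi.smul_apply, smul_eq_mul, cons_val_zero, cons_val_one, cons_val]
  · linear_combination r1 - 2 * q1 * r6 - 4 * q2 * r7
  · linear_combination r3 - 4 * q2 * r8
  · linear_combination r5 - 2 * q1 * r8
  · linear_combination r6
  · linear_combination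
  · linear_combination r7
  · linear_combination
  · linear_combination r8
  · linear_combination

theorem ker_verraM_one_one (q1 q2 : R) :
    LinearMap.ker (verraM q1 q2 1 1).mulVecLin =
      Submodule.span R (Set.range (verraKerBasis q1 q2)) := by
  refine le_antisymm (fun v hv => ?_) ?_
  · rw [eq_sum_verraKerBasis_of_mulVec_eq_zero hv]
    exact Submodule.sum_mem _ fun i _ => Submodule.smul_mem _ _ (Submodule.subset_span ⟨i, rfl⟩)
  · rw [Submodule.span_le]
    rintro _ ⟨i, rfl⟩
    exact verraM_one_one_mulVec_verraKerBasis q1 q2 i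

theorem linearIndependent_verraKerBasis [Nontrivial R] (q1 q2 : R) :
    LinearIndependent R (verraKerBasis q1 q2) := by
  have hpivot : LinearMap.funLeft R R ![4, 7, 8] ∘ verraKerBasis q1 q2 = Pi.basisFun R (Fin 3) := by
    ext i j
    fin_cases i <;> fin_cases j <;> simp [verraKerBasis]
  exact .of_comp _ (hpivot ▸ (Pi.basisFun R (Fin 3)).linearIndependent)

end

theorem ker_verraM_two_two {K : Type*} [Field K] (h2 : (2 : K) ≠ 0) (q1 q2 : K) :
    LinearMap.ker (verraM q1 q2 2 2).mulVecLin =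
      Submodule.span K (Set.range (verraKerBasis q1 q2)) := by
  rw [← ker_verraM_one_one]
  ext v
  have h := verraM_mul_mul_eq_smul (2 : K) q1 q2 1 1
  rw [mul_one] at h
  simp only [LinearMap.mem_ker, mulVecLin_apply, h, smul_mulVec, smul_eq_zero, h2, false_or]

theorem verra_E_rank_six_kernel_three :
    (verraM q1 q2 2 2).rank = 6 ∧
    LinearMap.ker (verraM q1 q2 2 2).mulVecLin =
      Submodule.span Kq {alpha, beta, gamma} := by
  have hker := ker_verraM_two_two two_ne_zero q1 q2
  have hrank := (verraM q1 q2 2 2).rank_add_card_eq_of_ker_eq_span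
    (linearIndependent_verraKerBasis q1 q2) hker
  have hbasis : Set.range (verraKerBasis q1 q2) = {alpha, beta, gamma} := by
    rw [verraKerBasis, range_cons, range_cons_cons_empty, Set.singleton_union]
    rfl
  rw [Fintype.card_fin, Fintype.card_fin] at hrank
  exact ⟨by omega, hbasis ▸ hker⟩
end

section
/- Let K = ℚ(q1,q2) and let V ⊂ K⁹ be the span of α = (2(q1+q2),0,0,−1,1,−1,0,0,0), β = (0,−2q2,2q1,0,0,0,−1,1,0), γ = (−4q1q2,0,0,−2q2,0,−2q1,0,0,1). Then α, β, γ are linearly independent over K, and V equals the generalized eigenspace of E = M(2,2) for the eigenvalue 0; moreover E·v = 0 for every v ∈ V (so the eigenvalue 0 is semisimple on V). -/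
open MvPolynomial Matrix

section ConsVal
variable {α : Type*}

@[simp] lemma cv_3_2 (x : α) (u : Fin 2 → α) : Matrix.vecCons x u (2 : Fin 3) = u 1 := rfl
@[simp] lemma cv_4_2 (x : α) (u : Fin 3 → α) : Matrix.vecCons x u (2 : Fin 4) = u 1 := rfl
@[simp] lemma cv_4_3 (x : α) (u : Fin 3 → α) : Matrix.vecCons x u (3 : Fin 4) = u 2 := rfl
@[simp] lemma cv_5_2 (x : α) (u : Fin 4 → α) : Matrix.vecCons x u (2 : Fin 5) = u 1 := rfl
@[simp] lemma cv_5_3 (x : α) (u : Fin 4 → α) : Matrix.vecCons x u (3 : Fin 5) = u 2 := rfl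
@[simp] lemma cv_5_4 (x : α) (u : Fin 4 → α) : Matrix.vecCons x u (4 : Fin 5) = u 3 := rfl
@[simp] lemma cv_6_2 (x : α) (u : Fin 5 → α) : Matrix.vecCons x u (2 : Fin 6) = u 1 := rfl
@[simp] lemma cv_6_3 (x : α) (u : Fin 5 → α) : Matrix.vecCons x u (3 : Fin 6) = u 2 := rfl
@[simp] lemma cv_6_4 (x : α) (u : Fin 5 → α) : Matrix.vecCons x u (4 : Fin 6) = u 3 := rfl
@[simp] lemma cv_6_5 (x : α) (u : Fin 5 → α) : Matrix.vecCons x u (5 : Fin 6) = u 4 := rfl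
@[simp] lemma cv_7_2 (x : α) (u : Fin 6 → α) : Matrix.vecCons x u (2 : Fin 7) = u 1 := rfl
@[simp] lemma cv_7_3 (x : α) (u : Fin 6 → α) : Matrix.vecCons x u (3 : Fin 7) = u 2 := rfl
@[simp] lemma cv_7_4 (x : α) (u : Fin 6 → α) : Matrix.vecCons x u (4 : Fin 7) = u 3 := rfl
@[simp] lemma cv_7_5 (x : α) (u : Fin 6 → α) : Matrix.vecCons x u (5 : Fin 7) = u 4 := rfl
@[simp] lemma cv_7_6 (x : α) (u : Fin 6 → α) : Matrix.vecCons x u (6 : Fin 7) = u 5 := rfl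
@[simp] lemma cv_8_2 (x : α) (u : Fin 7 → α) : Matrix.vecCons x u (2 : Fin 8) = u 1 := rfl
@[simp] lemma cv_8_3 (x : α) (u : Fin 7 → α) : Matrix.vecCons x u (3 : Fin 8) = u 2 := rfl
@[simp] lemma cv_8_4 (x : α) (u : Fin 7 → α) : Matrix.vecCons x u (4 : Fin 8) = u 3 := rfl
@[simp] lemma cv_8_5 (x : α) (u : Fin 7 → α) : Matrix.vecCons x u (5 : Fin 8) = u 4 := rfl
@[simp] lemma cv_8_6 (x : α) (u : Fin 7 → α) : Matrix.vecCons x u (6 : Fin 8) = u 5 := rfl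
@[simp] lemma cv_8_7 (x : α) (u : Fin 7 → α) : Matrix.vecCons x u (7 : Fin 8) = u 6 := rfl
@[simp] lemma cv_9_2 (x : α) (u : Fin 8 → α) : Matrix.vecCons x u (2 : Fin 9) = u 1 := rfl
@[simp] lemma cv_9_3 (x : α) (u : Fin 8 → α) : Matrix.vecCons x u (3 : Fin 9) = u 2 := rfl
@[simp] lemma cv_9_4 (x : α) (u : Fin 8 → α) : Matrix.vecCons x u (4 : Fin 9) = u 3 := rfl
@[simp] lemma cv_9_5 (x : α) (u : Fin 8 → α) : Matrix.vecCons x u (5 : Fin 9) = u 4 := rfl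
@[simp] lemma cv_9_6 (x : α) (u : Fin 8 → α) : Matrix.vecCons x u (6 : Fin 9) = u 5 := rfl
@[simp] lemma cv_9_7 (x : α) (u : Fin 8 → α) : Matrix.vecCons x u (7 : Fin 9) = u 6 := rfl
@[simp] lemma cv_9_8 (x : α) (u : Fin 8 → α) : Matrix.vecCons x u (8 : Fin 9) = u 7 := rfl

@[simp] lemma fs_3_2 : Fin.succ (2 : Fin 3) = (3 : Fin 4) := rfl
@[simp] lemma fs_4_2 : Fin.succ (2 : Fin 4) = (3 : Fin 5) := rfl
@[simp] lemma fs_4_3 : Fin.succ (3 : Fin 4) = (4 : Fin 5) := rfl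
@[simp] lemma fs_5_2 : Fin.succ (2 : Fin 5) = (3 : Fin 6) := rfl
@[simp] lemma fs_5_3 : Fin.succ (3 : Fin 5) = (4 : Fin 6) := rfl
@[simp] lemma fs_5_4 : Fin.succ (4 : Fin 5) = (5 : Fin 6) := rfl
@[simp] lemma fs_6_2 : Fin.succ (2 : Fin 6) = (3 : Fin 7) := rfl
@[simp] lemma fs_6_3 : Fin.succ (3 : Fin 6) = (4 : Fin 7) := rfl
@[simp] lemma fs_6_4 : Fin.succ (4 : Fin 6) = (5 : Fin 7) := rfl
@[simp] lemma fs_6_5 : Fin.succ (5 : Fin 6) = (6 : Fin 7) := rfl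
@[simp] lemma fs_7_2 : Fin.succ (2 : Fin 7) = (3 : Fin 8) := rfl
@[simp] lemma fs_7_3 : Fin.succ (3 : Fin 7) = (4 : Fin 8) := rfl
@[simp] lemma fs_7_4 : Fin.succ (4 : Fin 7) = (5 : Fin 8) := rfl
@[simp] lemma fs_7_5 : Fin.succ (5 : Fin 7) = (6 : Fin 8) := rfl
@[simp] lemma fs_7_6 : Fin.succ (6 : Fin 7) = (7 : Fin 8) := rfl
@[simp] lemma fs_8_2 : Fin.succ (2 : Fin 8) = (3 : Fin 9) := rfl
@[simp] lemma fs_8_3 : Fin.succ (3 : Fin 8) = (4 : Fin 9) := rfl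
@[simp] lemma fs_8_4 : Fin.succ (4 : Fin 8) = (5 : Fin 9) := rfl
@[simp] lemma fs_8_5 : Fin.succ (5 : Fin 8) = (6 : Fin 9) := rfl
@[simp] lemma fs_8_6 : Fin.succ (6 : Fin 8) = (7 : Fin 9) := rfl
@[simp] lemma fs_8_7 : Fin.succ (7 : Fin 8) = (8 : Fin 9) := rfl

end ConsVal

section Aux

lemma Kq.inj : Function.Injective (algebraMap (MvPolynomial (Fin 2) ℚ) Kq) :=
  IsFractionRing.injective _ _

lemma Kq.phi_ne {p : MvPolynomial (Fin 2) ℚ} (h : p ≠ 0) :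
    algebraMap (MvPolynomial (Fin 2) ℚ) Kq p ≠ 0 := by
  intro h0
  exact h (Kq.inj (by simpa using h0))

lemma q1_ne : (q1 : Kq) ≠ 0 := Kq.phi_ne (MvPolynomial.X_ne_zero 0)

lemma q2_ne : (q2 : Kq) ≠ 0 := Kq.phi_ne (MvPolynomial.X_ne_zero 1)

lemma sum_ne : (q1 + q2 : Kq) ≠ 0 := by
  rw [q1, q2, ← map_add]
  refine Kq.phi_ne ?_
  intro h
  have := congrArg (MvPolynomial.eval (fun _ => (1 : ℚ))) h
  simp at this

lemma diff_ne : (q2 - q1 : Kq) ≠ 0 := by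
  rw [q1, q2, ← map_sub]
  refine Kq.phi_ne ?_
  intro h
  have := congrArg (MvPolynomial.eval (fun i : Fin 2 => if i = 0 then (1 : ℚ) else 2)) h
  norm_num at this

lemma cancel {d x : Kq} (hd : d ≠ 0) (h : d * x = 0) : x = 0 :=
  (mul_eq_zero.mp h).resolve_left hd

lemma mulE_alpha : (verraM q1 q2 2 2) *ᵥ alpha = 0 := by
  funext i
  fin_cases i <;>
    · simp [verraM, alpha, Matrix.mulVec, dotProduct, Fin.sum_univ_succ,
        Matrix.vecHead, Matrix.vecTail]
      try ring

lemma mulE_beta : (verraM q1 q2 2 2) *ᵥ beta = 0 := by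
  funext i
  fin_cases i <;>
    · simp [verraM, beta, Matrix.mulVec, dotProduct, Fin.sum_univ_succ,
        Matrix.vecHead, Matrix.vecTail]
      try ring

lemma mulE_gamma : (verraM q1 q2 2 2) *ᵥ gamma = 0 := by
  funext i
  fin_cases i <;>
    · simp [verraM, gamma, Matrix.mulVec, dotProduct, Fin.sum_univ_succ,
        Matrix.vecHead, Matrix.vecTail]
      try ring

lemma span_mulVec : ∀ v ∈ Submodule.span Kq {alpha, beta, gamma},
    (verraM q1 q2 2 2) *ᵥ v = 0 := by
  intro v hv
  induction hv using Submodule.span_induction with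
  | mem x hx =>
    rcases hx with h | h | h
    · rw [h]; exact mulE_alpha
    · rw [h]; exact mulE_beta
    · rw [h]; exact mulE_gamma
  | zero => exact Matrix.mulVec_zero _
  | add x y _ _ hx hy => rw [Matrix.mulVec_add, hx, hy, add_zero]
  | smul c x _ hx => rw [Matrix.mulVec_smul, hx, smul_zero]

set_option maxHeartbeats 2000000 in
lemma key (w : Fin 9 → Kq) (hw4 : w 4 = 0) (hw7 : w 7 = 0) (hw8 : w 8 = 0)
    (h : (verraM q1 q2 2 2) *ᵥ ((verraM q1 q2 2 2) *ᵥ w) = 0) : w = 0 := by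
  have h0 := congrFun h 0
  have h1 := congrFun h 1
  have h2 := congrFun h 2
  have h3 := congrFun h 3
  have h4 := congrFun h 4
  have h5 := congrFun h 5
  have h6 := congrFun h 6
  have h7 := congrFun h 7
  have h8 := congrFun h 8
  simp [verraM, Matrix.mulVec, dotProduct, Fin.sum_univ_succ, Matrix.vecHead, Matrix.vecTail] at h0 h1 h2 h3 h4 h5 h6 h7 h8
  have hcube : ((q1 + q2) ^ 3 : Kq) ≠ 0 := pow_ne_zero _ sum_ne
  have hz0 : 8*q2*(q2-q1)*(q1+q2)^3 * w 0 = 0 := by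
    linear_combination (2*q2^4 + 2*q1*q2^3 - 2*q1^2*q2^2 - 2*q1^3*q2) * h0 + (-1*q2^5 - 2*q1*q2^4 + 2*q1^3*q2^2 + q1^4*q2) * h4 + (-40*q1*q2^5 - 40*q1^2*q2^4 + 40*q1^3*q2^3 + 40*q1^4*q2^2) * h8 - (-16*q2^6 - 48*q1*q2^5 - 32*q1^2*q2^4 + 32*q1^3*q2^3 + 48*q1^4*q2^2 + 16*q1^5*q2) * hw4 - (32*q1*q2^6 + 64*q1^2*q2^5 - 64*q1^4*q2^3 - 32*q1^5*q2^2) * hw8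
  have hz1 : 16*q1^2*q2*(q1+q2)^3 * w 1 = 0 := by
    linear_combination (-8*q1^2*q2^3 - 7*q1^3*q2^2 + q1^4*q2) * h1 + (6*q1^2*q2^3 + 6*q1^3*q2^2) * h2 + (20*q1^2*q2^4 + 10*q1^3*q2^3 - 10*q1^4*q2^2) * h7 - (32*q1^2*q2^5 + 96*q1^3*q2^4 + 96*q1^4*q2^3 + 32*q1^5*q2^2) * hw7
  have hz2 : 32*q1*q2*(q1+q2)^3 * w 2 = 0 := by
    linear_combination (2*q1*q2^3 - 5*q1^2*q2^2 - 7*q1^3*q2) * h2 + (-24*q1^2*q2^3 + 6*q1^3*q2^2 + 30*q1^4*q2) * h6 + (32*q1^2*q2^3 + 28*q1^3*q2^2 - 4*q1^4*q2) * h7 - (-64*q1^2*q2^4 - 192*q1^3*q2^3 - 192*q1^4*q2^2 - 64*q1^5*q2) * hw7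
  have hz3 : 16*q2*(q1+q2)^3 * w 3 = 0 := by
    linear_combination (-2*q2^3 - 4*q1*q2^2 - 2*q1^2*q2) * h3 + (q2^3 + 2*q1*q2^2 + q1^2*q2) * h4 + (8*q2^4 + 16*q1*q2^3 + 8*q1^2*q2^2) * h8 - (16*q2^4 + 48*q1*q2^3 + 48*q1^2*q2^2 + 16*q1^3*q2) * hw4 - (32*q2^5 + 96*q1*q2^4 + 96*q1^2*q2^3 + 32*q1^3*q2^2) * hw8
  have hz5 : 16*q2*(q1+q2)^3 * w 5 = 0 := by
    linear_combination (q2^3 + 2*q1*q2^2 + q1^2*q2) * h4 + (-2*q2^3 - 4*q1*q2^2 - 2*q1^2*q2) * h5 + (8*q1*q2^3 + 16*q1^2*q2^2 + 8*q1^3*q2) * h8 - (16*q2^4 + 48*q1*q2^3 + 48*q1^2*q2^2 + 16*q1^3*q2) * hw4 - (32*q1*q2^4 + 96*q1^2*q2^3 + 96*q1^3*q2^2 + 32*q1^4*q2) * hw8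
  have hz6 : 64*q1*q2*(q1+q2)^3 * w 6 = 0 := by
    linear_combination (3*q1*q2^2 + 3*q1^2*q2) * h1 + (4*q1*q2^3 - 4*q1^2*q2^2 - 8*q1^3*q2) * h6 + (-14*q1*q2^3 - 10*q1^2*q2^2 + 4*q1^3*q2) * h7 - (64*q1*q2^4 + 192*q1^2*q2^3 + 192*q1^3*q2^2 + 64*q1^4*q2) * hw7
  have e0 : w 0 = 0 := cancel (by
    exact mul_ne_zero (mul_ne_zero (mul_ne_zero (by norm_num) q2_ne) diff_ne) hcube) hz0
  have e1 : w 1 = 0 := cancel (by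
    exact mul_ne_zero (mul_ne_zero (mul_ne_zero (by norm_num) (pow_ne_zero _ q1_ne)) q2_ne) hcube) hz1
  have e2 : w 2 = 0 := cancel (by
    exact mul_ne_zero (mul_ne_zero (mul_ne_zero (by norm_num) q1_ne) q2_ne) hcube) hz2
  have e3 : w 3 = 0 := cancel (by
    exact mul_ne_zero (mul_ne_zero (by norm_num) q2_ne) hcube) hz3
  have e5 : w 5 = 0 := cancel (by
    exact mul_ne_zero (mul_ne_zero (by norm_num) q2_ne) hcube) hz5
  have e6 : w 6 = 0 := cancel (by
    exact mul_ne_zero (mul_ne_zero (mul_ne_zero (by norm_num) q1_ne) q2_ne) hcube) hz6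
  funext i
  fin_cases i
  · exact e0
  · exact e1
  · exact e2
  · exact e3
  · exact hw4
  · exact e5
  · exact e6
  · exact hw7
  · exact hw8

lemma ker2_sub_span (v : Fin 9 → Kq)
    (hv : (verraM q1 q2 2 2) *ᵥ ((verraM q1 q2 2 2) *ᵥ v) = 0) :
    v ∈ Submodule.span Kq {alpha, beta, gamma} := by
  set w : Fin 9 → Kq := v - v 4 • alpha - v 7 • beta - v 8 • gamma with hw
  have hw4 : w 4 = 0 := by simp [hw, alpha, beta, gamma, Matrix.vecHead, Matrix.vecTail]
  have hw7 : w 7 = 0 := by simp [hw, alpha, beta, gamma, Matrix.vecHead, Matrix.vecTail]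
  have hw8 : w 8 = 0 := by simp [hw, alpha, beta, gamma, Matrix.vecHead, Matrix.vecTail]
  have hEw : (verraM q1 q2 2 2) *ᵥ w = (verraM q1 q2 2 2) *ᵥ v := by
    rw [hw]
    rw [Matrix.mulVec_sub, Matrix.mulVec_sub, Matrix.mulVec_sub,
      Matrix.mulVec_smul, Matrix.mulVec_smul, Matrix.mulVec_smul,
      mulE_alpha, mulE_beta, mulE_gamma]
    simp
  have hkey : w = 0 := key w hw4 hw7 hw8 (by rw [hEw]; exact hv)
  rw [hw] at hkey
  rw [sub_sub, sub_sub] at hkey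
  have hv' : v = v 4 • alpha + (v 7 • beta + v 8 • gamma) := sub_eq_zero.mp hkey
  rw [hv']
  refine Submodule.add_mem _ ?_ (Submodule.add_mem _ ?_ ?_) <;>
    refine Submodule.smul_mem _ _ (Submodule.subset_span ?_)
  · exact Set.mem_insert _ _
  · exact Set.mem_insert_of_mem _ (Set.mem_insert _ _)
  · exact Set.mem_insert_of_mem _ (Set.mem_insert_of_mem _ rfl)

end Aux

lemma pow_mulVecLin (M : Matrix (Fin 9) (Fin 9) Kq) (k : ℕ) :
    (M.mulVecLin ^ k) = (M ^ k).mulVecLin := by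
  induction k with
  | zero => simp [Module.End.one_eq_id]
  | succ n ih =>
    rw [pow_succ, pow_succ, ih, Matrix.mulVecLin_mul]
    rfl

lemma kerpow (k : ℕ) : ∀ v : Fin 9 → Kq, ((verraM q1 q2 2 2) ^ (k + 1)) *ᵥ v = 0 →
    v ∈ Submodule.span Kq {alpha, beta, gamma} := by
  induction k with
  | zero =>
    intro v hv
    rw [pow_one] at hv
    exact ker2_sub_span v (by rw [hv, Matrix.mulVec_zero])
  | succ n ih =>
    intro v hv
    have h1 : ((verraM q1 q2 2 2) ^ (n + 1)) *ᵥ ((verraM q1 q2 2 2) *ᵥ v) = 0 := by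
      rw [Matrix.mulVec_mulVec, ← pow_succ]
      exact hv
    have hEv := ih _ h1
    exact ker2_sub_span v (span_mulVec _ hEv)

theorem verra_gen_eigenspace_zero :
    LinearIndependent Kq ![alpha, beta, gamma] ∧
    Module.End.maxGenEigenspace (verraM q1 q2 2 2).mulVecLin 0 =
      Submodule.span Kq {alpha, beta, gamma} ∧
    ∀ v ∈ Submodule.span Kq {alpha, beta, gamma},
      (verraM q1 q2 2 2).mulVec v = 0 := by
  refine ⟨?_, le_antisymm ?_ ?_, span_mulVec⟩
  · rw [Fintype.linearIndependent_iff]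
    intro g hg
    have h4 := congrFun hg 4
    have h7 := congrFun hg 7
    have h8 := congrFun hg 8
    simp [Fin.sum_univ_three, alpha, beta, gamma, Matrix.vecHead, Matrix.vecTail] at h4 h7 h8
    intro i
    fin_cases i <;> assumption
  · intro v hv
    rw [Module.End.mem_maxGenEigenspace] at hv
    obtain ⟨k, hk⟩ := hv
    simp only [zero_smul, sub_zero] at hk
    rw [pow_mulVecLin] at hk
    match k, hk with
    | 0, hk =>
      have : v = 0 := by simpa using hk
      rw [this]; exact Submodule.zero_mem _
    | (n + 1), hk =>
      exact kerpow n v hk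
  · intro v hv
    rw [Module.End.mem_maxGenEigenspace]
    refine ⟨1, ?_⟩
    simp only [zero_smul, sub_zero, pow_one, Matrix.mulVecLin_apply]
    exact span_mulVec v hv
end

section
/- Over K = ℚ(q1,q2), the image of the matrix E = M(2,2) intersects the kernel of E trivially: ker(E) ∩ im(E) = {0}. Consequently K⁹ = ker(E) ⊕ im(E) and ker(E²) = ker(E). -/
open MvPolynomial Matrix

/-- Auxiliary matrix `N = -(E^5 - 48(q1+q2)E^3 + (768q1^2-5376q1q2+768q2^2)E)` with
`E = verraM q1 q2 2 2`, coming from the characteristic polynomial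
`t^3 (t^6 - 48(q1+q2)t^4 + (768q1^2-5376q1q2+768q2^2)t^2 - 4096(q1+q2)^3)` of `E`.
It satisfies `(-4096)(q1+q2)^3 • E = N * E * E`. -/
def verraNg {R : Type*} [CommRing R] (q1 q2 : R) : Matrix (Fin 9) (Fin 9) R :=
  !![0, (-2560)*q1*q2^2+(1024)*q1^2*q2+(-1024)*q1^3, (-1024)*q2^3+(1024)*q1*q2^2+(-2560)*q1^2*q2, 0, 0, 0, (4096)*q1*q2^3+(-4096)*q1^2*q2^2+(1024)*q1^3*q2, (1024)*q1*q2^3+(-4096)*q1^2*q2^2+(4096)*q1^3*q2, 0;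
     (256)*q2^2+(2048)*q1*q2+(-512)*q1^2, 0, 0, (512)*q1*q2^2+(-5120)*q1^2*q2+(-1024)*q1^3, (-1024)*q2^3+(-5120)*q1*q2^2+(-4096)*q1^2*q2, (-512)*q2^3+(-1024)*q1*q2^2+(4096)*q1^2*q2, 0, 0, (1024)*q1*q2^3+(-4096)*q1^2*q2^2+(4096)*q1^3*q2;
     (-512)*q2^2+(2048)*q1*q2+(256)*q1^2, 0, 0, (4096)*q1*q2^2+(-1024)*q1^2*q2+(-512)*q1^3, (-4096)*q1*q2^2+(-5120)*q1^2*q2+(-1024)*q1^3, (-1024)*q2^3+(-5120)*q1*q2^2+(512)*q1^2*q2, 0, 0, (4096)*q1*q2^3+(-4096)*q1^2*q2^2+(1024)*q1^3*q2;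
     0, (256)*q2^2+(2048)*q1*q2+(-512)*q1^2, (-2304)*q1*q2, 0, 0, 0, (-1024)*q2^3+(-5120)*q1*q2^2+(512)*q1^2*q2, (-512)*q2^3+(-1024)*q1*q2^2+(4096)*q1^2*q2, 0;
     0, (-512)*q2^2+(512)*q1*q2+(1024)*q1^2, (1024)*q2^2+(512)*q1*q2+(-512)*q1^2, 0, 0, 0, (-4096)*q1*q2^2+(-5120)*q1^2*q2+(-1024)*q1^3, (-1024)*q2^3+(-5120)*q1*q2^2+(-4096)*q1^2*q2, 0;
     0, (-2304)*q1*q2, (-512)*q2^2+(2048)*q1*q2+(256)*q1^2, 0, 0, 0, (4096)*q1*q2^2+(-1024)*q1^2*q2+(-512)*q1^3, (512)*q1*q2^2+(-5120)*q1^2*q2+(-1024)*q1^3, 0;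
     (-768)*q2+(384)*q1, 0, 0, (-512)*q2^2+(2048)*q1*q2+(256)*q1^2, (1024)*q2^2+(512)*q1*q2+(-512)*q1^2, (-2304)*q1*q2, 0, 0, (-1024)*q2^3+(1024)*q1*q2^2+(-2560)*q1^2*q2;
     (384)*q2+(-768)*q1, 0, 0, (-2304)*q1*q2, (-512)*q2^2+(512)*q1*q2+(1024)*q1^2, (256)*q2^2+(2048)*q1*q2+(-512)*q1^2, 0, 0, (-2560)*q1*q2^2+(1024)*q1^2*q2+(-1024)*q1^3;
     0, (384)*q2+(-768)*q1, (-768)*q2+(384)*q1, 0, 0, 0, (-512)*q2^2+(2048)*q1*q2+(256)*q1^2, (256)*q2^2+(2048)*q1*q2+(-512)*q1^2, 0]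

private lemma cv_6_5_s17 {α : Type*} (a : α) (u : Fin 5 → α) : vecCons a u (5 : Fin 6) = u 4 := rfl
private lemma cv_7_5_s17 {α : Type*} (a : α) (u : Fin 6 → α) : vecCons a u (5 : Fin 7) = u 4 := rfl
private lemma cv_7_6_s17 {α : Type*} (a : α) (u : Fin 6 → α) : vecCons a u (6 : Fin 7) = u 5 := rfl
private lemma cv_8_5_s17 {α : Type*} (a : α) (u : Fin 7 → α) : vecCons a u (5 : Fin 8) = u 4 := rfl
private lemma cv_8_6_s17 {α : Type*} (a : α) (u : Fin 7 → α) : vecCons a u (6 : Fin 8) = u 5 := rfl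
private lemma cv_8_7_s17 {α : Type*} (a : α) (u : Fin 7 → α) : vecCons a u (7 : Fin 8) = u 6 := rfl
private lemma cv_9_5_s17 {α : Type*} (a : α) (u : Fin 8 → α) : vecCons a u (5 : Fin 9) = u 4 := rfl
private lemma cv_9_6_s17 {α : Type*} (a : α) (u : Fin 8 → α) : vecCons a u (6 : Fin 9) = u 5 := rfl
private lemma cv_9_7_s17 {α : Type*} (a : α) (u : Fin 8 → α) : vecCons a u (7 : Fin 9) = u 6 := rfl
private lemma cv_9_8_s17 {α : Type*} (a : α) (u : Fin 8 → α) : vecCons a u (8 : Fin 9) = u 7 := rfl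

set_option maxHeartbeats 1000000 in
private lemma verra_key0 {R : Type*} [CommRing R] (q1 q2 x0 x1 x2 x3 x4 x5 x6 x7 x8 : R) :
    (((-4096 : R) * (q1 + q2)^3) • (verraM q1 q2 2 2).mulVec ![x0,x1,x2,x3,x4,x5,x6,x7,x8]) 0
      = ((verraNg q1 q2).mulVec ((verraM q1 q2 2 2).mulVec
          ((verraM q1 q2 2 2).mulVec ![x0,x1,x2,x3,x4,x5,x6,x7,x8]))) 0 := by
  simp [verraM, verraNg, Matrix.mulVec, dotProduct, Fin.sum_univ_succ]
  ring

set_option maxHeartbeats 1000000 in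
private lemma verra_key1 {R : Type*} [CommRing R] (q1 q2 x0 x1 x2 x3 x4 x5 x6 x7 x8 : R) :
    (((-4096 : R) * (q1 + q2)^3) • (verraM q1 q2 2 2).mulVec ![x0,x1,x2,x3,x4,x5,x6,x7,x8]) 1
      = ((verraNg q1 q2).mulVec ((verraM q1 q2 2 2).mulVec
          ((verraM q1 q2 2 2).mulVec ![x0,x1,x2,x3,x4,x5,x6,x7,x8]))) 1 := by
  simp [verraM, verraNg, Matrix.mulVec, dotProduct, Fin.sum_univ_succ]
  ring

set_option maxHeartbeats 1000000 in
private lemma verra_key2 {R : Type*} [CommRing R] (q1 q2 x0 x1 x2 x3 x4 x5 x6 x7 x8 : R) :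
    (((-4096 : R) * (q1 + q2)^3) • (verraM q1 q2 2 2).mulVec ![x0,x1,x2,x3,x4,x5,x6,x7,x8]) 2
      = ((verraNg q1 q2).mulVec ((verraM q1 q2 2 2).mulVec
          ((verraM q1 q2 2 2).mulVec ![x0,x1,x2,x3,x4,x5,x6,x7,x8]))) 2 := by
  simp [verraM, verraNg, Matrix.mulVec, dotProduct, Fin.sum_univ_succ]
  ring

set_option maxHeartbeats 1000000 in
private lemma verra_key3 {R : Type*} [CommRing R] (q1 q2 x0 x1 x2 x3 x4 x5 x6 x7 x8 : R) :
    (((-4096 : R) * (q1 + q2)^3) • (verraM q1 q2 2 2).mulVec ![x0,x1,x2,x3,x4,x5,x6,x7,x8]) 3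
      = ((verraNg q1 q2).mulVec ((verraM q1 q2 2 2).mulVec
          ((verraM q1 q2 2 2).mulVec ![x0,x1,x2,x3,x4,x5,x6,x7,x8]))) 3 := by
  simp [verraM, verraNg, Matrix.mulVec, dotProduct, Fin.sum_univ_succ]
  ring

set_option maxHeartbeats 1000000 in
private lemma verra_key4 {R : Type*} [CommRing R] (q1 q2 x0 x1 x2 x3 x4 x5 x6 x7 x8 : R) :
    (((-4096 : R) * (q1 + q2)^3) • (verraM q1 q2 2 2).mulVec ![x0,x1,x2,x3,x4,x5,x6,x7,x8]) 4
      = ((verraNg q1 q2).mulVec ((verraM q1 q2 2 2).mulVec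
          ((verraM q1 q2 2 2).mulVec ![x0,x1,x2,x3,x4,x5,x6,x7,x8]))) 4 := by
  simp [verraM, verraNg, Matrix.mulVec, dotProduct, Fin.sum_univ_succ]
  ring

set_option maxHeartbeats 1000000 in
private lemma verra_key5 {R : Type*} [CommRing R] (q1 q2 x0 x1 x2 x3 x4 x5 x6 x7 x8 : R) :
    (((-4096 : R) * (q1 + q2)^3) • (verraM q1 q2 2 2).mulVec ![x0,x1,x2,x3,x4,x5,x6,x7,x8]) 5
      = ((verraNg q1 q2).mulVec ((verraM q1 q2 2 2).mulVec
          ((verraM q1 q2 2 2).mulVec ![x0,x1,x2,x3,x4,x5,x6,x7,x8]))) 5 := by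
  simp [verraM, verraNg, Matrix.mulVec, dotProduct, Fin.sum_univ_succ, cv_6_5_s17, cv_7_5_s17, cv_7_6_s17, cv_8_5_s17, cv_8_6_s17, cv_8_7_s17, cv_9_5_s17, cv_9_6_s17, cv_9_7_s17, cv_9_8_s17]
  ring

set_option maxHeartbeats 1000000 in
private lemma verra_key6 {R : Type*} [CommRing R] (q1 q2 x0 x1 x2 x3 x4 x5 x6 x7 x8 : R) :
    (((-4096 : R) * (q1 + q2)^3) • (verraM q1 q2 2 2).mulVec ![x0,x1,x2,x3,x4,x5,x6,x7,x8]) 6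
      = ((verraNg q1 q2).mulVec ((verraM q1 q2 2 2).mulVec
          ((verraM q1 q2 2 2).mulVec ![x0,x1,x2,x3,x4,x5,x6,x7,x8]))) 6 := by
  simp [verraM, verraNg, Matrix.mulVec, dotProduct, Fin.sum_univ_succ, cv_6_5_s17, cv_7_5_s17, cv_7_6_s17, cv_8_5_s17, cv_8_6_s17, cv_8_7_s17, cv_9_5_s17, cv_9_6_s17, cv_9_7_s17, cv_9_8_s17]
  ring

set_option maxHeartbeats 1000000 in
private lemma verra_key7 {R : Type*} [CommRing R] (q1 q2 x0 x1 x2 x3 x4 x5 x6 x7 x8 : R) :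
    (((-4096 : R) * (q1 + q2)^3) • (verraM q1 q2 2 2).mulVec ![x0,x1,x2,x3,x4,x5,x6,x7,x8]) 7
      = ((verraNg q1 q2).mulVec ((verraM q1 q2 2 2).mulVec
          ((verraM q1 q2 2 2).mulVec ![x0,x1,x2,x3,x4,x5,x6,x7,x8]))) 7 := by
  simp [verraM, verraNg, Matrix.mulVec, dotProduct, Fin.sum_univ_succ, cv_6_5_s17, cv_7_5_s17, cv_7_6_s17, cv_8_5_s17, cv_8_6_s17, cv_8_7_s17, cv_9_5_s17, cv_9_6_s17, cv_9_7_s17, cv_9_8_s17]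
  ring

set_option maxHeartbeats 1000000 in
private lemma verra_key8 {R : Type*} [CommRing R] (q1 q2 x0 x1 x2 x3 x4 x5 x6 x7 x8 : R) :
    (((-4096 : R) * (q1 + q2)^3) • (verraM q1 q2 2 2).mulVec ![x0,x1,x2,x3,x4,x5,x6,x7,x8]) 8
      = ((verraNg q1 q2).mulVec ((verraM q1 q2 2 2).mulVec
          ((verraM q1 q2 2 2).mulVec ![x0,x1,x2,x3,x4,x5,x6,x7,x8]))) 8 := by
  simp [verraM, verraNg, Matrix.mulVec, dotProduct, Fin.sum_univ_succ, cv_6_5_s17, cv_7_5_s17, cv_7_6_s17, cv_8_5_s17, cv_8_6_s17, cv_8_7_s17, cv_9_5_s17, cv_9_6_s17, cv_9_7_s17, cv_9_8_s17]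
  ring

/-- The key identity `(-4096)(q1+q2)^3 • (E *ᵥ x) = N *ᵥ (E *ᵥ (E *ᵥ x))`. -/
lemma verra_keyg {R : Type*} [CommRing R] (q1 q2 : R) (x : Fin 9 → R) :
    ((-4096 : R) * (q1 + q2)^3) • (verraM q1 q2 2 2).mulVec x
      = (verraNg q1 q2).mulVec ((verraM q1 q2 2 2).mulVec ((verraM q1 q2 2 2).mulVec x)) := by
  have hx : x = ![x 0, x 1, x 2, x 3, x 4, x 5, x 6, x 7, x 8] := by
    funext i; fin_cases i <;> rfl
  rw [hx]
  funext i
  fin_cases i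
  · exact verra_key0 q1 q2 _ _ _ _ _ _ _ _ _
  · exact verra_key1 q1 q2 _ _ _ _ _ _ _ _ _
  · exact verra_key2 q1 q2 _ _ _ _ _ _ _ _ _
  · exact verra_key3 q1 q2 _ _ _ _ _ _ _ _ _
  · exact verra_key4 q1 q2 _ _ _ _ _ _ _ _ _
  · exact verra_key5 q1 q2 _ _ _ _ _ _ _ _ _
  · exact verra_key6 q1 q2 _ _ _ _ _ _ _ _ _
  · exact verra_key7 q1 q2 _ _ _ _ _ _ _ _ _
  · exact verra_key8 q1 q2 _ _ _ _ _ _ _ _ _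

lemma verra_c_ne_zero : ((-4096 : Kq) * (q1 + q2)^3) ≠ 0 := by
  have h12 : q1 + q2 ≠ 0 := by
    rw [q1, q2, ← map_add,
      map_ne_zero_iff _ (IsFractionRing.injective (MvPolynomial (Fin 2) ℚ) Kq)]
    intro h
    have := congrArg (MvPolynomial.eval fun _ => (1 : ℚ)) h
    simp at this
  exact mul_ne_zero (by norm_num) (pow_ne_zero _ h12)

lemma verra_key (x : Fin 9 → Kq)
    (h : (verraM q1 q2 2 2).mulVec ((verraM q1 q2 2 2).mulVec x) = 0) :
    (verraM q1 q2 2 2).mulVec x = 0 := by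
  have h1 := verra_keyg q1 q2 x
  rw [h, Matrix.mulVec_zero] at h1
  rcases smul_eq_zero.mp h1 with hc | hx
  · exact absurd hc verra_c_ne_zero
  · exact hx

theorem verra_zero_semisimple :
    LinearMap.ker (verraM q1 q2 2 2).mulVecLin ⊓
      LinearMap.range (verraM q1 q2 2 2).mulVecLin = ⊥ ∧
    LinearMap.ker (verraM q1 q2 2 2).mulVecLin ⊔
      LinearMap.range (verraM q1 q2 2 2).mulVecLin = ⊤ ∧
    LinearMap.ker ((verraM q1 q2 2 2).mulVecLin ∘ₗ (verraM q1 q2 2 2).mulVecLin) =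
      LinearMap.ker (verraM q1 q2 2 2).mulVecLin := by
  have hker : ∀ x : Fin 9 → Kq,
      (verraM q1 q2 2 2).mulVecLin ((verraM q1 q2 2 2).mulVecLin x) = 0 →
      (verraM q1 q2 2 2).mulVecLin x = 0 := by
    intro x hx
    simpa using verra_key x (by simpa using hx)
  have hinf : LinearMap.ker (verraM q1 q2 2 2).mulVecLin ⊓
      LinearMap.range (verraM q1 q2 2 2).mulVecLin = ⊥ := by
    rw [eq_bot_iff]
    rintro x ⟨hk, y, rfl⟩
    have : (verraM q1 q2 2 2).mulVecLin y = 0 := hker y hk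
    simp [this]
  refine ⟨hinf, ?_, ?_⟩
  · apply Submodule.eq_top_of_finrank_eq
    have h1 := Submodule.finrank_sup_add_finrank_inf_eq
      (LinearMap.ker (verraM q1 q2 2 2).mulVecLin)
      (LinearMap.range (verraM q1 q2 2 2).mulVecLin)
    rw [hinf] at h1
    simp only [finrank_bot, add_zero] at h1
    rw [h1, add_comm]
    exact LinearMap.finrank_range_add_finrank_ker _
  · ext x
    simp only [LinearMap.mem_ker, LinearMap.comp_apply]
    exact ⟨hker x, fun h => by rw [h]; simp⟩
end
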